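/- arXiv:1410.8440 — 2 statements merged into one kernel-verified Lean document; each statement's English description precedes it below -/
import Mathlib

section
/- Let $n, r, d, g$ be positive integers with $g + 1 \leq n - d - r$, and define $p_Y(g) = \prod_{i=0}^{g-1}(1 - \frac{r}{n-i}) - \prod_{i=0}^{g-1}(1 - \frac{r+d}{n-i})$. Then $p_Y(g) > p_Y(g+1)$ if and only if $\prod_{i=0}^{g-1}\left(1 + \frac{d}{n-d-r-i}\right) > 1 + \frac{d}{r}$. -/
/-! Write `a_i = 1 - r/(n-i)` and `b_i = 1 - (r+d)/(n-i)`, with `A = ∏ a_i` and `B = ∏ b_i` over `i < g`.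
Then `p_Y(g) - p_Y(g+1) = (r A - (r+d) B) / (n-g)`, and since `a_i / b_i = 1 + d/(n-d-r-i)` we have
`A = B P` with `P` the product on the right-hand side. As `B > 0`, the sign of `p_Y(g) - p_Y(g+1)` is the
sign of `r P - (r + d)`. -/

open Finset

lemma sub_prod_range_succ_sub (f h : ℕ → ℝ) (m : ℕ) :
    (∏ i ∈ range m, f i - ∏ i ∈ range m, h i)
        - (∏ i ∈ range (m + 1), f i - ∏ i ∈ range (m + 1), h i)
      = (∏ i ∈ range m, f i) * (1 - f m) - (∏ i ∈ range m, h i) * (1 - h m) := by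
  rw [prod_range_succ, prod_range_succ]
  ring

lemma one_sub_div_eq_mul_one_add_div {N r d : ℝ} (hN : N ≠ 0) (hNdr : N - d - r ≠ 0) :
    1 - r / N = (1 - (r + d) / N) * (1 + d / (N - d - r)) := by
  field_simp
  ring

lemma one_add_div_lt_iff {r d P : ℝ} (hr : 0 < r) : 1 + d / r < P ↔ r + d < P * r := by
  rw [← div_lt_iff₀ hr, add_div, div_self hr.ne']

theorem pY_decreasing_iff_general (n r d g : ℕ) (hr : 0 < r)
    (hgle : g + 1 ≤ n - d - r) :
    (∏ i ∈ Finset.range g, (1 - (r : ℝ) / ((n : ℝ) - i))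
        - ∏ i ∈ Finset.range g, (1 - ((r : ℝ) + d) / ((n : ℝ) - i))
      > ∏ i ∈ Finset.range (g + 1), (1 - (r : ℝ) / ((n : ℝ) - i))
        - ∏ i ∈ Finset.range (g + 1), (1 - ((r : ℝ) + d) / ((n : ℝ) - i)))
    ↔ ∏ i ∈ Finset.range g, (1 + (d : ℝ) / ((n : ℝ) - d - r - i)) > 1 + (d : ℝ) / r := by
  have hn : (g : ℝ) + 1 + d + r ≤ n := by exact_mod_cast (by omega : g + 1 + d + r ≤ n)
  have hr₀ : (0 : ℝ) < r := by exact_mod_cast hr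
  have hd₀ : (0 : ℝ) ≤ d := d.cast_nonneg
  have hlt : ∀ i ∈ range g, (r : ℝ) + d < n - i := fun i hi => by
    have : (i : ℝ) + 1 ≤ g := by exact_mod_cast mem_range.mp hi
    linarith
  set B := ∏ i ∈ range g, (1 - ((r : ℝ) + d) / ((n : ℝ) - i))
  set P := ∏ i ∈ range g, (1 + (d : ℝ) / ((n : ℝ) - d - r - i))
  have hB : 0 < B := prod_pos fun i hi => by
    rw [sub_pos, div_lt_one (by linarith [hlt i hi])]
    exact hlt i hi
  have hAB : ∏ i ∈ range g, (1 - (r : ℝ) / ((n : ℝ) - i)) = B * P := by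
    rw [← prod_mul_distrib]
    refine prod_congr rfl fun i hi => ?_
    rw [show (n : ℝ) - d - r - i = n - i - d - r by ring]
    exact one_sub_div_eq_mul_one_add_div (by linarith [hlt i hi]) (by linarith [hlt i hi])
  rw [gt_iff_lt, ← sub_pos, sub_prod_range_succ_sub, hAB, sub_sub_cancel, sub_sub_cancel,
    mul_assoc, ← mul_sub, mul_pos_iff_of_pos_left hB, mul_div_assoc',
    ← sub_div, div_pos_iff_of_pos_right (by linarith), sub_pos, gt_iff_lt, one_add_div_lt_iff hr₀]

theorem pY_decreasing_iff (n r d g : ℕ) (hn : 0 < n) (hr : 0 < r) (hd : 0 < d)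
    (hg : 0 < g) (hgle : g + 1 ≤ n - d - r) :
    (∏ i ∈ Finset.range g, (1 - (r : ℝ) / ((n : ℝ) - i))
        - ∏ i ∈ Finset.range g, (1 - ((r : ℝ) + d) / ((n : ℝ) - i))
      > ∏ i ∈ Finset.range (g + 1), (1 - (r : ℝ) / ((n : ℝ) - i))
        - ∏ i ∈ Finset.range (g + 1), (1 - ((r : ℝ) + d) / ((n : ℝ) - i)))
    ↔ ∏ i ∈ Finset.range g, (1 + (d : ℝ) / ((n : ℝ) - d - r - i)) > 1 + (d : ℝ) / r :=
  pY_decreasing_iff_general n r d g hr hgle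
end

section
/- Let $n, r, d$ be positive integers with $d + r < n$ and let $g_1 = \frac{\ln(1 + d/r)}{\ln(1 + d/(n-d-r))}$. Then for every integer $g$ with $g_1 < g$ and $g + 1 \leq n-d-r$, the probability $p_Y(g) = \prod_{i=0}^{g-1}(1-\frac{r}{n-i}) - \prod_{i=0}^{g-1}(1-\frac{r+d}{n-i})$ satisfies $p_Y(g) > p_Y(g+1)$. -/
/-!
Write `A g = ∏_{i<g} (1 - r/(n-i))` and `B g = ∏_{i<g} (1 - (r+d)/(n-i))`, so that
`p_Y(g) = A g - B g`. Peeling off the last factor gives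
`p_Y(g) - p_Y(g+1) = (r A g - (r+d) B g) / (n-g)`, so the claim is `(1 + d/r) B g < A g`.
Factor by factor `A/B` is `1 + d/(n-i-d-r) ≥ 1 + d/(n-d-r)`, hence
`A g ≥ (1 + d/(n-d-r))^g B g`, and `g > g₁` says exactly that `(1 + d/(n-d-r))^g > 1 + d/r`.
-/

open Finset

/-- The probability that a uniformly random `g`-subset of `n` items avoids `a` given items. -/
noncomputable def avoidProb (n a : ℝ) (g : ℕ) : ℝ :=
  ∏ i ∈ range g, (1 - a / (n - i))

theorem avoidProb_sub_avoidProb_succ (n a : ℝ) (g : ℕ) :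
    avoidProb n a g - avoidProb n a (g + 1) = a * avoidProb n a g / (n - g) := by
  rw [avoidProb, avoidProb, prod_range_succ]
  ring

theorem avoidProb_pos {n a : ℝ} {g : ℕ} (ha : 0 ≤ a) (hg : a + g ≤ n) :
    0 < avoidProb n a g := by
  refine prod_pos fun i hi => ?_
  have hi : (i : ℝ) + 1 ≤ g := by exact_mod_cast mem_range.mp hi
  rw [sub_pos, div_lt_one (by linarith)]
  linarith

theorem one_add_div_mul_one_sub_div_le {x r d M : ℝ} (hr : 0 ≤ r) (hd : 0 ≤ d)
    (hx : r + d < x) (hxM : x - r - d ≤ M) : (1 + d / M) * (1 - (r + d) / x) ≤ 1 - r / x := by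
  have hx₀ : 0 < x := by linarith
  have hM : 0 < M := by linarith
  have hdM : d / M * (x - r - d) ≤ d := by
    calc d / M * (x - r - d) ≤ d / M * M := by gcongr
      _ = d := div_mul_cancel₀ d hM.ne'
  rw [one_sub_div hx₀.ne', one_sub_div hx₀.ne', ← mul_div_assoc]
  gcongr
  linarith

theorem one_add_div_pow_mul_avoidProb_le {n r d : ℝ} {g : ℕ} (hr : 0 ≤ r) (hd : 0 ≤ d)
    (hg : (g : ℝ) ≤ n - d - r) :
    (1 + d / (n - d - r)) ^ g * avoidProb n (r + d) g ≤ avoidProb n r g := by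
  have hq : 0 ≤ d / (n - d - r) := div_nonneg hd (by linarith [Nat.cast_nonneg (α := ℝ) g])
  calc (1 + d / (n - d - r)) ^ g * avoidProb n (r + d) g
      = ∏ i ∈ range g, (1 + d / (n - d - r)) * (1 - (r + d) / (n - i)) := by
        rw [avoidProb, prod_mul_distrib, prod_const, card_range]
    _ ≤ avoidProb n r g := prod_le_prod (fun i hi => ?nonneg) (fun i hi => ?factor)
  all_goals
    have hi : (i : ℝ) + 1 ≤ g := by exact_mod_cast mem_range.mp hi
    have hfactor : r + d < n - i := by linarith
  case nonneg =>
    have : 0 ≤ 1 - (r + d) / (n - i) := by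
      rw [sub_nonneg, div_le_one (by linarith)]
      exact hfactor.le
    positivity
  case factor =>
    exact one_add_div_mul_one_sub_div_le hr hd hfactor (by linarith [Nat.cast_nonneg (α := ℝ) i])

theorem pY_decreasing_above_g1_general (n r d : ℕ) (hr : 0 < r) (hd : 0 < d)
    (g : ℕ)
    (hg1 : Real.log (1 + (d : ℝ) / r) / Real.log (1 + (d : ℝ) / ((n : ℝ) - d - r)) < g)
    (hgle : g + 1 ≤ n - d - r) :
    ∏ i ∈ Finset.range g, (1 - (r : ℝ) / ((n : ℝ) - i))
        - ∏ i ∈ Finset.range g, (1 - ((r : ℝ) + d) / ((n : ℝ) - i))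
      > ∏ i ∈ Finset.range (g + 1), (1 - (r : ℝ) / ((n : ℝ) - i))
        - ∏ i ∈ Finset.range (g + 1), (1 - ((r : ℝ) + d) / ((n : ℝ) - i)) := by
  have hr : (0 : ℝ) < r := by exact_mod_cast hr
  have hd : (0 : ℝ) < d := by exact_mod_cast hd
  have hgM : (g : ℝ) + 1 ≤ n - d - r := by
    have : ((g + 1 + d + r : ℕ) : ℝ) ≤ n := by exact_mod_cast (by omega : g + 1 + d + r ≤ n)
    push_cast at this
    linarith
  set q := 1 + (d : ℝ) / (n - d - r)
  have hq : 1 < q := lt_add_of_pos_right 1 (div_pos hd (by linarith))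
  have hpow : 1 + (d : ℝ) / r < q ^ g :=
    Real.lt_pow_of_log_lt (by linarith) ((div_lt_iff₀ (Real.log_pos hq)).mp hg1)
  have hB : 0 < avoidProb n (r + d) g := avoidProb_pos (by positivity) (by linarith)
  have hcross : (r + d) * avoidProb n (r + d) g < r * avoidProb n r g :=
    calc (r + d) * avoidProb n (r + d) g = r * ((1 + d / r) * avoidProb n (r + d) g) := by
          field_simp
      _ < r * (q ^ g * avoidProb n (r + d) g) := by gcongr
      _ ≤ r * avoidProb n r g := by
          gcongr
          exact one_add_div_pow_mul_avoidProb_le hr.le hd.le (by linarith)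
  have hng : (0 : ℝ) < n - g := by linarith
  change avoidProb n r g - avoidProb n (r + d) g
    > avoidProb n r (g + 1) - avoidProb n (r + d) (g + 1)
  have hstepA := avoidProb_sub_avoidProb_succ n r g
  have hstepB := avoidProb_sub_avoidProb_succ n (r + d) g
  have := div_lt_div_of_pos_right hcross hng
  linarith

theorem pY_decreasing_above_g1 (n r d : ℕ) (hn : 0 < n) (hr : 0 < r) (hd : 0 < d)
    (hdr : d + r < n) (g : ℕ)
    (hg1 : Real.log (1 + (d : ℝ) / r) / Real.log (1 + (d : ℝ) / ((n : ℝ) - d - r)) < g)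
    (hgle : g + 1 ≤ n - d - r) :
    ∏ i ∈ Finset.range g, (1 - (r : ℝ) / ((n : ℝ) - i))
        - ∏ i ∈ Finset.range g, (1 - ((r : ℝ) + d) / ((n : ℝ) - i))
      > ∏ i ∈ Finset.range (g + 1), (1 - (r : ℝ) / ((n : ℝ) - i))
        - ∏ i ∈ Finset.range (g + 1), (1 - ((r : ℝ) + d) / ((n : ℝ) - i)) :=
  pY_decreasing_above_g1_general n r d hr hd g hg1 hgle
end
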